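/- Let T be a tree with t ≥ 3 nodes. Then there exists a family of at most ⌊t/2⌋ triplets (connected 3-node subtrees) covering all nodes of T such that the associated triplets graph is connected. -/

import Mathlib

/-!
Induct on the number of vertices, two at a time. Root the tree anywhere and take a deepest
vertex `u`, a leaf with parent `p`. Either `p` has a second deepest child `u'`, or `p` has degree
two with parent `q`. The triplet `{u, u', p}`, resp. `{u, p, q}`, touches the rest of the tree only
at its hub `p`, resp. `q`, so deleting its two other vertices leaves a tree on `t - 2` vertices;
adding the triplet to a cover of that tree gives a cover of `T` with one more triplet, meeting the
old ones at the hub. The bases are `t = 3` (one triplet) and `t = 4` (the complements of two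
leaves).
-/

open SimpleGraph Finset

namespace Finset

variable {α β : Type*} [DecidableEq α] [DecidableEq β]

def intersectionGraph (F : Finset (Finset α)) : SimpleGraph F :=
  SimpleGraph.fromRel fun a b => ((a : Finset α) ∩ b).Nonempty

lemma intersectionGraph_adj {F : Finset (Finset α)} {a b : F} :
    F.intersectionGraph.Adj a b ↔ a ≠ b ∧ ((a : Finset α) ∩ b).Nonempty := by
  rw [intersectionGraph, fromRel_adj, inter_comm (b : Finset α), or_self]

end Finset

namespace SimpleGraph

variable {α β : Type*} [DecidableEq α] [DecidableEq β]

lemma Connected.intersectionGraph_insert {F : Finset (Finset α)} {s t : Finset α}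
    (hF : F.intersectionGraph.Connected) (ht : t ∈ F) (hst : (s ∩ t).Nonempty) :
    (insert s F).intersectionGraph.Connected := by
  let incl : F.intersectionGraph →g (insert s F).intersectionGraph :=
    ⟨fun a => ⟨a, mem_insert_of_mem a.2⟩, fun {a b} hab => by
      rw [intersectionGraph_adj] at hab ⊢
      exact ⟨fun h => hab.1 (Subtype.ext (Subtype.mk.inj h)), hab.2⟩⟩
  have hts :
      (insert s F).intersectionGraph.Reachable (incl ⟨t, ht⟩) ⟨s, mem_insert_self s F⟩ := by
    by_cases h : t = s
    · subst h; rfl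
    · exact (intersectionGraph_adj.mpr ⟨fun h' => h (congrArg Subtype.val h'),
        by rwa [inter_comm]⟩).reachable
  rw [connected_iff_exists_forall_reachable]
  refine ⟨⟨s, mem_insert_self s F⟩, fun ⟨a, ha⟩ => ?_⟩
  rcases mem_insert.mp ha with rfl | ha
  · rfl
  · exact (((hF ⟨a, ha⟩ ⟨t, ht⟩).map incl).trans hts).symm

lemma connected_intersectionGraph_singleton (s : Finset α) :
    ({s} : Finset (Finset α)).intersectionGraph.Connected :=
  .of_subsingleton

lemma Connected.intersectionGraph_map {F : Finset (Finset α)} (f : α ↪ β)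
    (hF : F.intersectionGraph.Connected) :
    (F.map (mapEmbedding f).toEmbedding).intersectionGraph.Connected := by
  refine hF.map ⟨fun a => ⟨a.1.map f, mem_map_of_mem _ a.2⟩, fun {a b} hab => ?_⟩ ?_
  · rw [intersectionGraph_adj] at hab ⊢
    refine ⟨fun h => hab.1 (Subtype.ext (Finset.map_injective f (Subtype.mk.inj h))), ?_⟩
    simpa [← Finset.map_inter] using hab.2
  · rintro ⟨s, hs⟩
    obtain ⟨t, ht, rfl⟩ := mem_map.mp hs
    exact ⟨⟨t, ht⟩, rfl⟩

variable {V : Type*} {G : SimpleGraph V}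

def IsTriplet (G : SimpleGraph V) (s : Finset V) : Prop :=
  s.card = 3 ∧ (G.induce (s : Set V)).Connected

lemma isTriplet_of_adj [DecidableEq V] {a b c : V} (hab : G.Adj a b) (hbc : G.Adj b c)
    (hac : a ≠ c) : G.IsTriplet {a, b, c} := by
  refine ⟨card_eq_three.mpr ⟨a, b, c, hab.ne, hac, hbc.ne, rfl⟩, ?_⟩
  have h : ((({a, b, c} : Finset V)) : Set V) = {a, b} ∪ {b, c} := by
    ext v
    simp only [coe_insert, coe_singleton, Set.mem_insert_iff, Set.mem_singleton_iff,
      Set.mem_union]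
    tauto
  rw [h]
  exact induce_union_connected (induce_pair_connected_of_adj hab).preconnected
    (induce_pair_connected_of_adj hbc).preconnected ⟨b, by simp⟩

lemma IsTriplet.map_subtype {S : Set V} {t : Finset S} (h : (G.induce S).IsTriplet t) :
    G.IsTriplet (t.map (Function.Embedding.subtype (· ∈ S))) := by
  refine ⟨(card_map _).trans h.1,
    h.2.map ⟨fun v => ⟨v.1.1, mem_map_of_mem _ v.2⟩, id⟩ ?_⟩
  rintro ⟨v, hv⟩
  obtain ⟨w, hw, rfl⟩ := mem_map.mp hv
  exact ⟨⟨w, hw⟩, rfl⟩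

structure IsConnectedTripletCover [DecidableEq V] (G : SimpleGraph V) (F : Finset (Finset V)) :
    Prop where
  isTriplet : ∀ s ∈ F, G.IsTriplet s
  exists_mem : ∀ v, ∃ s ∈ F, v ∈ s
  connected : F.intersectionGraph.Connected

lemma isConnectedTripletCover_singleton_univ [DecidableEq V] [Fintype V] (hG : G.Connected)
    (h3 : Fintype.card V = 3) :
    G.IsConnectedTripletCover {univ} where
  isTriplet s hs := by
    rw [mem_singleton.mp hs]
    refine ⟨h3, ?_⟩
    rw [coe_univ]
    exact (induceUnivIso G).connected_iff.mpr hG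
  exists_mem v := ⟨univ, mem_singleton_self _, mem_univ v⟩
  connected := connected_intersectionGraph_singleton _

lemma IsConnectedTripletCover.insert_map_subtype [DecidableEq V] {S : Set V}
    {F : Finset (Finset S)} (hF : (G.induce S).IsConnectedTripletCover F) {s : Finset V} {c : V}
    (hs : G.IsTriplet s) (hSs : ∀ v ∉ S, v ∈ s) (hcs : c ∈ s) (hcS : c ∈ S) :
    G.IsConnectedTripletCover
      (insert s (F.map (mapEmbedding (Function.Embedding.subtype (· ∈ S))).toEmbedding)) where
  isTriplet t ht := by
    rcases mem_insert.mp ht with rfl | ht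
    · exact hs
    · obtain ⟨t', ht', rfl⟩ := mem_map.mp ht
      exact (hF.isTriplet t' ht').map_subtype
  exists_mem v := by
    by_cases hv : v ∈ S
    · obtain ⟨t, ht, hvt⟩ := hF.exists_mem ⟨v, hv⟩
      exact ⟨_, mem_insert_of_mem (mem_map_of_mem _ ht), mem_map_of_mem _ hvt⟩
    · exact ⟨s, mem_insert_self _ _, hSs v hv⟩
  connected := by
    obtain ⟨t, ht, hct⟩ := hF.exists_mem ⟨c, hcS⟩
    exact (hF.connected.intersectionGraph_map _).intersectionGraph_insert
      (mem_map_of_mem _ ht) ⟨c, mem_inter.mpr ⟨hcs, mem_map_of_mem _ hct⟩⟩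

lemma Connected.induce_of_forall_adj_eq (hG : G.Connected) {S : Set V} {c : V} (hc : c ∈ S)
    (hS : ∀ a ∉ S, ∀ w ∈ S, G.Adj a w → w = c) : (G.induce S).Connected := by
  classical
  -- Retracting every vertex outside `S` onto `c` turns walks of `G` into walks of `G[S]`.
  let r : V → S := fun v => if h : v ∈ S then ⟨v, h⟩ else ⟨c, hc⟩
  have hr : ∀ a b, G.Adj a b → (G.induce S).Reachable (r a) (r b) := by
    intro a b hab
    by_cases ha : a ∈ S <;> by_cases hb : b ∈ S
    · simp only [r, dif_pos ha, dif_pos hb]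
      exact (show (G.induce S).Adj ⟨a, ha⟩ ⟨b, hb⟩ from hab).reachable
    · obtain rfl := hS b hb a ha hab.symm
      simp [r, ha, hb]
    · obtain rfl := hS a ha b hb hab
      simp [r, ha, hb]
    · simp [r, ha, hb]
  have hreach : ∀ a b, G.Reachable a b → (G.induce S).Reachable (r a) (r b) := by
    intro a b hab
    rw [reachable_iff_reflTransGen] at hab ⊢
    exact Relation.ReflTransGen.lift' r
      (fun a b h => (reachable_iff_reflTransGen _ _).mp (hr a b h)) _ _ hab
  refine (connected_iff_exists_forall_reachable _).mpr ⟨⟨c, hc⟩, fun ⟨v, hv⟩ => ?_⟩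
  simpa [r, hc, hv] using hreach c v (hG c v)

lemma Connected.exists_adj_dist_add_one (hG : G.Connected) (r : V) {x : V} (hx : x ≠ r) :
    ∃ w, G.Adj x w ∧ G.dist r w + 1 = G.dist r x := by
  obtain ⟨p, hp⟩ := hG.exists_walk_length_eq_dist x r
  have hnil : ¬p.Nil := Walk.not_nil_of_ne hx
  refine ⟨p.snd, p.adj_snd hnil, ?_⟩
  have hle : G.dist r p.snd + 1 ≤ G.dist r x := by
    rw [dist_comm, dist_comm (u := r), ← hp, ← p.length_tail_add_one hnil]
    exact Nat.add_le_add_right (dist_le p.tail) 1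
  rcases (p.adj_snd hnil).diff_dist_adj (u := r) with h | h | h <;> omega

lemma IsTree.eq_of_adj_of_dist_add_one_eq (hT : G.IsTree) {r x w w' : V} (hw : G.Adj x w)
    (hw' : G.Adj x w') (h : G.dist r w + 1 = G.dist r x) (h' : G.dist r w' + 1 = G.dist r x) :
    w = w' := by
  classical
  obtain ⟨P, hP, -⟩ := hT.connected.exists_path_of_dist r x
  have key : ∀ y, G.Adj x y → G.dist r y + 1 = G.dist r x → y = P.penultimate := by
    intro y hy hdy
    obtain ⟨Q, hQ, hQlen⟩ := hT.connected.exists_path_of_dist r y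
    have hxQ : x ∉ Q.support := fun hx => by
      have := (dist_le (Q.takeUntil x hx)).trans (Q.length_takeUntil_le_length hx)
      omega
    exact hT.isAcyclic.eq_penultimate_of_adj_end hP hy
      (hT.isAcyclic.mem_support_of_ne_mem_support_of_adj_of_isPath hP hQ hy hxQ)
  exact (key w hw h).trans (key w' hw' h').symm

lemma IsTree.eq_of_adj_of_forall_dist_le (hT : G.IsTree) {r v p : V}
    (hmax : ∀ y, G.dist r y ≤ G.dist r v) (hp : G.Adj v p) (hdp : G.dist r p + 1 = G.dist r v)
    {w : V} (hw : G.Adj v w) : w = p := by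
  refine hT.eq_of_adj_of_dist_add_one_eq hw hp ?_ hdp
  have := hmax w
  rcases hT.dist_eq_dist_add_one_of_adj r hw with h | h <;> omega

structure IsPendantPair (G : SimpleGraph V) (u x c : V) : Prop where
  ne : u ≠ x
  ne_hub : u ≠ c
  adj_hub : G.Adj x c
  adj_or_adj : G.Adj u x ∨ G.Adj u c
  eq_or_eq_of_adj_fst : ∀ w, G.Adj u w → w = x ∨ w = c
  eq_or_eq_of_adj_snd : ∀ w, G.Adj x w → w = u ∨ w = c

namespace IsPendantPair

variable [DecidableEq V] {u x c : V}

lemma isTriplet (h : G.IsPendantPair u x c) : G.IsTriplet {u, x, c} := by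
  rcases h.adj_or_adj with hux | huc
  · exact isTriplet_of_adj hux h.adj_hub h.ne_hub
  · rw [pair_comm]
    exact isTriplet_of_adj huc h.adj_hub.symm h.ne

lemma isTree_induce_compl [Fintype V] (h : G.IsPendantPair u x c) (hT : G.IsTree) :
    (G.induce ((({u, x} : Finset V)ᶜ : Finset V) : Set V)).IsTree := by
  refine ⟨hT.connected.induce_of_forall_adj_eq (c := c) ?_ ?_, hT.isAcyclic.induce _⟩
  · simp [h.ne_hub.symm, h.adj_hub.ne.symm]
  · intro a ha w hw haw
    simp only [mem_coe, mem_compl, mem_insert, mem_singleton, not_or, not_and_or, not_not]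
      at ha hw
    rcases ha with rfl | rfl
    · exact (h.eq_or_eq_of_adj_fst w haw).resolve_left hw.2
    · exact (h.eq_or_eq_of_adj_snd w haw).resolve_left hw.1

end IsPendantPair

lemma IsTree.exists_isPendantPair [Fintype V] [DecidableEq V] (hT : G.IsTree)
    (h3 : 3 ≤ Fintype.card V) : ∃ u x c, G.IsPendantPair u x c := by
  obtain ⟨r⟩ := hT.connected.nonempty
  have : Nonempty V := ⟨r⟩
  obtain ⟨u, hu⟩ := Finite.exists_max (G.dist r)
  have hur : u ≠ r := by
    obtain ⟨v, hv⟩ := Fintype.exists_ne_of_one_lt_card (by omega) r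
    have := hT.connected.pos_dist_of_ne hv.symm
    refine fun h => absurd (hu v) ?_
    rw [h, dist_self]
    omega
  obtain ⟨p, hup, hpu⟩ := hT.connected.exists_adj_dist_add_one r hur
  have hu_leaf := fun w => hT.eq_of_adj_of_forall_dist_le hu hup hpu (w := w)
  by_cases hsibling : ∃ u', u' ≠ u ∧ G.Adj p u' ∧ G.dist r u' = G.dist r u
  · obtain ⟨u', hu'u, hpu', hdu'⟩ := hsibling
    have hu'_leaf := fun w => hT.eq_of_adj_of_forall_dist_le (hdu' ▸ hu) hpu'.symm (by omega)
      (w := w)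
    exact ⟨u, u', p, hu'u.symm, hup.ne, hpu'.symm, Or.inr hup,
      fun w hw => Or.inr (hu_leaf w hw), fun w hw => Or.inr (hu'_leaf w hw)⟩
  push Not at hsibling
  -- If `p` were the root, every vertex would be at depth ≤ 1, so a third vertex would be a
  -- second deepest child of `p`.
  have hpr : p ≠ r := by
    rintro rfl
    obtain ⟨v, hv⟩ : (({u, p} : Finset V)ᶜ).Nonempty := by
      rw [← card_pos, card_compl]
      have := card_le_two (a := u) (b := p)
      omega
    simp only [mem_compl, mem_insert, mem_singleton, not_or] at hv
    have := hu v
    have := hT.connected.pos_dist_of_ne (Ne.symm hv.2)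
    rw [dist_self] at hpu
    exact hsibling v hv.1 (dist_eq_one_iff_adj.mp (by omega)) (by omega)
  obtain ⟨q, hpq, hqp⟩ := hT.connected.exists_adj_dist_add_one r hpr
  refine ⟨u, p, q, hup.ne, by rintro rfl; omega, hpq, Or.inl hup,
    fun w hw => Or.inl (hu_leaf w hw), fun w hw => ?_⟩
  rcases hT.dist_eq_dist_add_one_of_adj r hw with h | h
  · exact Or.inr (hT.eq_of_adj_of_dist_add_one_eq hw hpq (by omega) hqp)
  · by_contra! hne
    exact hsibling w hne.1 hw (by omega)

lemma IsTree.exists_connectedTripletCover_of_card_eq_four [Fintype V] [DecidableEq V]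
    (hT : G.IsTree) (h4 : Fintype.card V = 4) :
    ∃ F : Finset (Finset V), F.card ≤ 2 ∧ G.IsConnectedTripletCover F := by
  classical
  have : Nontrivial V := Fintype.one_lt_card_iff_nontrivial.mp (by omega)
  obtain ⟨ℓ₁, ℓ₂, hne, h₁, h₂⟩ := hT.exists_ne_and_degree_eq_one
  have htriplet : ∀ ℓ, G.degree ℓ = 1 → G.IsTriplet {ℓ}ᶜ := fun ℓ hℓ =>
    ⟨by rw [card_compl, card_singleton, h4], by
      rw [coe_compl, coe_singleton]
      exact hT.connected.induce_compl_singleton_of_degree_eq_one hℓ⟩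
  obtain ⟨v, hv⟩ : (({ℓ₁, ℓ₂} : Finset V)ᶜ).Nonempty := by
    rw [← card_pos, card_compl]
    have := card_le_two (a := ℓ₁) (b := ℓ₂)
    omega
  refine ⟨{{ℓ₁}ᶜ, {ℓ₂}ᶜ}, card_le_two, ⟨?_, fun w => ?_, ?_⟩⟩
  · simp only [mem_insert, mem_singleton, forall_eq_or_imp, forall_eq]
    exact ⟨htriplet ℓ₁ h₁, htriplet ℓ₂ h₂⟩
  · by_cases hw : w = ℓ₁
    · exact ⟨{ℓ₂}ᶜ, by simp, by simp [hw, hne]⟩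
    · exact ⟨{ℓ₁}ᶜ, by simp, by simp [hw]⟩
  · refine (connected_intersectionGraph_singleton _).intersectionGraph_insert
      (mem_singleton_self _) ⟨v, ?_⟩
    simp only [mem_compl, mem_insert, mem_singleton, not_or] at hv
    simp [hv.1, hv.2]

theorem IsTree.exists_connectedTripletCover {V : Type*} [Fintype V] [DecidableEq V]
    {G : SimpleGraph V} (hT : G.IsTree) (h3 : 3 ≤ Fintype.card V) :
    ∃ F : Finset (Finset V), F.card ≤ Fintype.card V / 2 ∧ G.IsConnectedTripletCover F := by
  induction hn : Fintype.card V using Nat.strong_induction_on generalizing V with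
  | _ n ih =>
  rcases (show n = 3 ∨ n = 4 ∨ 5 ≤ n by omega) with h | h | h
  · exact ⟨{univ}, by rw [card_singleton]; omega,
      isConnectedTripletCover_singleton_univ hT.connected (hn.trans h)⟩
  · obtain ⟨F, hF, hcover⟩ := hT.exists_connectedTripletCover_of_card_eq_four (hn.trans h)
    exact ⟨F, by omega, hcover⟩
  obtain ⟨u, x, c, hP⟩ := hT.exists_isPendantPair h3
  have hcard : Fintype.card ((({u, x} : Finset V)ᶜ : Finset V) : Set V) = n - 2 := by
    simp only [coe_sort_coe, Fintype.card_coe]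
    rw [card_compl, card_pair hP.ne, hn]
  obtain ⟨F, hFcard, hF⟩ := ih (n - 2) (by omega) (hP.isTree_induce_compl hT) (by omega) hcard
  refine ⟨_, (card_insert_le _ _).trans ?_,
    hF.insert_map_subtype (c := c) hP.isTriplet ?_ ?_ ?_⟩
  · rw [card_map]
    omega
  · intro v hv
    simp only [coe_compl, coe_insert, coe_singleton, Set.mem_compl_iff, Set.mem_insert_iff,
      Set.mem_singleton_iff, not_not] at hv
    simp only [mem_insert, mem_singleton]
    tauto
  · simp
  · simp [hP.ne_hub.symm, hP.adj_hub.ne.symm]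

end SimpleGraph

/-- Let `T` be a tree with `t ≥ 3` nodes. Then there exists a family of at most
`⌊t/2⌋` triplets (connected 3-node subtrees) covering all nodes of `T` such that the associated
triplets graph (triplets as vertices, edges between triplets sharing at least one node) is
connected. -/
theorem tree_triplet_cover_connected {V : Type} [Fintype V] [DecidableEq V]
    (G : SimpleGraph V) (hT : G.IsTree) (h3 : 3 ≤ Fintype.card V) :
    ∃ F : Finset (Finset V),
      F.card ≤ Fintype.card V / 2 ∧
      (∀ s ∈ F, s.card = 3 ∧ (G.induce (↑s : Set V)).Connected) ∧
      (∀ v : V, ∃ s ∈ F, v ∈ s) ∧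
      (SimpleGraph.fromRel (fun a b : ↥F => ((a : Finset V) ∩ (b : Finset V)).Nonempty)).Connected := by
  obtain ⟨F, hcard, hF⟩ := hT.exists_connectedTripletCover h3
  exact ⟨F, hcard, hF.isTriplet, hF.exists_mem, hF.connected⟩
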